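/- arXiv:1707.01767 — 5 statements merged into one kernel-verified Lean document; each statement's English description precedes it below -/
import Mathlib

section
/- Let k be a finite field with c elements and characteristic p, let d be a positive integer, and let q be a prime number coprime to both p and d. Then Irr_k(dq) ≥ Irr_k(q), i.e. the number of monic irreducible polynomials of degree dq in k[X] is at least the number of monic irreducible polynomials of degree q in k[X]. -/
/-!
Work in an algebraic closure `K` of `k`, with `c = #k`. The roots of `X ^ c ^ n - X` in `K` are
exactly the elements whose minimal polynomial has degree dividing `n`; there are `c ^ n` of
them, and those of degree exactly `n` number `n * Irr(n)`. For the prime `q` this gives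
`q * Irr(q) = c ^ q - c`. For `n = d * q`, a root of degree `≠ n` is a root of
`X ^ c ^ (n / ℓ) - X` for some prime `ℓ ∣ n`, so
`n * Irr(n) ≥ c ^ n - ∑ ℓ, c ^ (n / ℓ)`, and for `d ≥ 2` an elementary estimate bounds this
below by `d * c ^ q`.
-/

open Polynomial

namespace Nat

theorem exists_mem_primeFactors_dvd_div {e n : ℕ} (hn : n ≠ 0) (hen : e ∣ n) (hne : e ≠ n) :
    ∃ ℓ ∈ n.primeFactors, e ∣ n / ℓ := by
  have hquot : n / e ≠ 1 := fun h => hne (eq_of_dvd_of_div_eq_one hen h)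
  obtain ⟨ℓ, hℓ, hℓdvd⟩ := exists_prime_and_dvd hquot
  have hmul : e * ℓ ∣ n := mul_dvd_of_dvd_div hen hℓdvd
  refine ⟨ℓ, mem_primeFactors.2 ⟨hℓ, (Dvd.intro_left e rfl).trans hmul, hn⟩, ?_⟩
  exact dvd_div_of_mul_dvd (mul_comm e ℓ ▸ hmul)

theorem div_ne_zero_of_mem_primeFactors {ℓ n : ℕ} (hℓ : ℓ ∈ n.primeFactors) :
    n / ℓ ≠ 0 :=
  (div_pos (le_of_mem_primeFactors hℓ) (pos_of_mem_primeFactors hℓ)).ne'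

theorem card_primeFactors_le_sub_one (n : ℕ) : n.primeFactors.card ≤ n - 1 := by
  have hsub : n.primeFactors ⊆ Finset.Icc 2 n := fun ℓ hℓ =>
    Finset.mem_Icc.2 ⟨(prime_of_mem_primeFactors hℓ).two_le, le_of_mem_primeFactors hℓ⟩
  simpa using Finset.card_le_card hsub

theorem card_primeFactors_mul_prime_le {d q : ℕ} (hd : d ≠ 0) (hq : q.Prime) :
    (d * q).primeFactors.card ≤ d := by
  rw [primeFactors_mul hd hq.ne_zero, hq.primeFactors]
  have := d.card_primeFactors_le_sub_one
  have := Finset.card_union_le d.primeFactors {q}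
  simp only [Finset.card_singleton] at this
  omega

theorem two_mul_le_two_pow (n : ℕ) : 2 * n ≤ 2 ^ n := by
  rcases n with _ | n
  · simp
  · rw [pow_succ']
    exact Nat.mul_le_mul_left 2 Nat.lt_two_pow_self

theorem mul_pow_add_sum_primeFactors_le {c d q : ℕ} (hc : 2 ≤ c) (hd : 2 ≤ d) (hq : q.Prime) :
    d * c ^ q + ∑ ℓ ∈ (d * q).primeFactors, c ^ (d * q / ℓ) ≤ c ^ (d * q) := by
  set m := d * q
  have hdm : 2 * d ≤ m := by rw [mul_comm]; exact Nat.mul_le_mul_left d hq.two_le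
  have hqm : 2 * q ≤ m := Nat.mul_le_mul_right q hd
  have hsum : ∑ ℓ ∈ m.primeFactors, c ^ (m / ℓ) ≤ d * c ^ (m / 2) := by
    refine (Finset.sum_le_card_nsmul _ _ _ fun ℓ hℓ => ?_).trans
      (Nat.mul_le_mul_right _ (card_primeFactors_mul_prime_le (by omega) hq))
    exact Nat.pow_le_pow_right (by omega)
      (div_le_div_left (prime_of_mem_primeFactors hℓ).two_le two_pos)
  calc d * c ^ q + ∑ ℓ ∈ m.primeFactors, c ^ (m / ℓ)
      ≤ d * c ^ (m / 2) + d * c ^ (m / 2) :=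
        add_le_add (Nat.mul_le_mul_left d (Nat.pow_le_pow_right (by omega) (by omega))) hsum
    _ = 2 * d * c ^ (m / 2) := by ring
    _ ≤ c ^ d * c ^ (m / 2) := by
        gcongr
        exact (two_mul_le_two_pow d).trans (Nat.pow_le_pow_left hc d)
    _ = c ^ (d + m / 2) := (pow_add c d (m / 2)).symm
    _ ≤ c ^ m := Nat.pow_le_pow_right (by omega) (by omega)

end Nat

theorem Polynomial.finite_setOf_natDegree_le {R : Type*} [Semiring R] [Finite R] (n : ℕ) :
    {f : R[X] | f.natDegree ≤ n}.Finite := by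
  have : Finite (degreeLT R (n + 1)) := .of_equiv _ (degreeLTEquiv R (n + 1)).toEquiv.symm
  refine (degreeLT R (n + 1) : Set R[X]).toFinite.subset fun f hf => ?_
  rw [SetLike.mem_coe, mem_degreeLT]
  exact (degree_le_of_natDegree_le hf).trans_lt (WithBot.coe_lt_coe.2 n.lt_succ_self)

theorem Polynomial.ncard_rootSet_eq_natDegree {F K : Type*} [Field F] [Field K] [Algebra F K]
    {f : F[X]} (hsep : f.Separable) (hsplit : Splits (f.map (algebraMap F K))) :
    (f.rootSet K).ncard = f.natDegree := by
  rw [← Nat.card_coe_set_eq, Nat.card_eq_fintype_card, card_rootSet_eq_natDegree hsep hsplit]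

theorem minpoly.setOf_natDegree_eq_biUnion_rootSet {F K : Type*} [Field F] [Field K]
    [Algebra F K] {n : ℕ} (hn : n ≠ 0) :
    {α : K | (minpoly F α).natDegree = n} =
      ⋃ f ∈ {f : F[X] | f.Monic ∧ Irreducible f ∧ f.natDegree = n}, f.rootSet K := by
  ext α
  simp only [Set.mem_ofPred_eq, Set.mem_iUnion, exists_prop]
  constructor
  · intro hα
    have hint : IsIntegral F α :=
      minpoly.ne_zero_iff.1 fun h => hn (by rw [← hα, h, natDegree_zero])
    exact ⟨minpoly F α, ⟨minpoly.monic hint, minpoly.irreducible hint, hα⟩,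
      mem_rootSet.2 ⟨minpoly.ne_zero hint, minpoly.aeval F α⟩⟩
  · rintro ⟨f, ⟨hmonic, hirr, hdeg⟩, hroot⟩
    rw [← minpoly.eq_of_irreducible_of_monic hirr (mem_rootSet.1 hroot).2 hmonic, hdeg]

namespace FiniteField

variable (k : Type*) [Field k] [Fintype k] (K : Type*) [Field K] [Algebra k K]

theorem mem_rootSet_X_pow_card_pow_sub_X_iff {n : ℕ} (hn : n ≠ 0) (α : K) :
    α ∈ (X ^ Fintype.card k ^ n - X : k[X]).rootSet K ↔ (minpoly k α).natDegree ∣ n := by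
  by_cases hα : IsIntegral k α
  · rw [mem_rootSet, and_iff_right (X_pow_card_pow_sub_X_ne_zero k hn Fintype.one_lt_card),
      ← minpoly.dvd_iff, ← Nat.card_eq_fintype_card,
      (minpoly.irreducible hα).natDegree_dvd_iff_dvd_X_pow_card_pow_sub_X]
  · rw [minpoly.eq_zero hα, natDegree_zero, zero_dvd_iff, iff_false_intro hn, iff_false]
    exact fun hroot => hα (isAlgebraic_of_mem_rootSet hroot).isIntegral

variable [IsAlgClosed K]

theorem ncard_rootSet_X_pow_card_pow_sub_X {n : ℕ} (hn : n ≠ 0) :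
    ((X ^ Fintype.card k ^ n - X : k[X]).rootSet K).ncard = Fintype.card k ^ n := by
  have hsep : (X ^ Fintype.card k ^ n - X : k[X]).Separable :=
    galois_poly_separable (ringChar k) _
      (dvd_pow ((CharP.cast_eq_zero_iff k _ _).1 (cast_card_eq_zero k)) hn)
  rw [ncard_rootSet_eq_natDegree hsep (IsAlgClosed.splits _),
    X_pow_card_pow_sub_X_natDegree_eq k hn Fintype.one_lt_card]

theorem ncard_setOf_natDegree_minpoly_eq {n : ℕ} (hn : n ≠ 0) :
    {α : K | (minpoly k α).natDegree = n}.ncard =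
      n * {f : k[X] | f.Monic ∧ Irreducible f ∧ f.natDegree = n}.ncard := by
  have hfin : {f : k[X] | f.Monic ∧ Irreducible f ∧ f.natDegree = n}.Finite :=
    (finite_setOf_natDegree_le n).subset fun f hf => hf.2.2.le
  have hdisj : {f : k[X] | f.Monic ∧ Irreducible f ∧ f.natDegree = n}.PairwiseDisjoint
      (rootSet · K) := by
    intro f ⟨hf, hfirr, _⟩ g ⟨hg, hgirr, _⟩ hfg
    refine Set.disjoint_left.2 fun α hαf hαg => hfg ?_
    exact (minpoly.eq_of_irreducible_of_monic hfirr (mem_rootSet.1 hαf).2 hf).trans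
      (minpoly.eq_of_irreducible_of_monic hgirr (mem_rootSet.1 hαg).2 hg).symm
  rw [minpoly.setOf_natDegree_eq_biUnion_rootSet hn,
    hfin.ncard_biUnion (fun f _ => rootSet_finite f K) hdisj, ← finsum_one, mul_finsum_mem]
  refine finsum_mem_congr rfl fun f ⟨_, hirr, hdeg⟩ => ?_
  rw [ncard_rootSet_eq_natDegree (PerfectField.separable_of_irreducible hirr)
    (IsAlgClosed.splits _), hdeg, mul_one]

theorem ncard_setOf_natDegree_minpoly_eq_prime {q : ℕ} (hq : q.Prime) :
    {α : K | (minpoly k α).natDegree = q}.ncard = Fintype.card k ^ q - Fintype.card k := by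
  have hsub : (X ^ Fintype.card k ^ 1 - X : k[X]).rootSet K ⊆
      (X ^ Fintype.card k ^ q - X : k[X]).rootSet K := fun α hα => by
    rw [mem_rootSet_X_pow_card_pow_sub_X_iff k K one_ne_zero] at hα
    rw [mem_rootSet_X_pow_card_pow_sub_X_iff k K hq.ne_zero]
    exact hα.trans (one_dvd q)
  have hdiff : {α : K | (minpoly k α).natDegree = q} =
      (X ^ Fintype.card k ^ q - X : k[X]).rootSet K \
        (X ^ Fintype.card k ^ 1 - X : k[X]).rootSet K := by
    ext α
    rw [Set.mem_sdiff, mem_rootSet_X_pow_card_pow_sub_X_iff k K hq.ne_zero,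
      mem_rootSet_X_pow_card_pow_sub_X_iff k K one_ne_zero, Nat.dvd_prime hq, Nat.dvd_one]
    have := hq.one_lt.ne'
    simp only [Set.mem_ofPred_eq]
    omega
  rw [hdiff, Set.ncard_sdiff hsub (rootSet_finite _ K),
    ncard_rootSet_X_pow_card_pow_sub_X k K hq.ne_zero,
    ncard_rootSet_X_pow_card_pow_sub_X k K one_ne_zero, pow_one]

theorem card_pow_le_ncard_setOf_natDegree_minpoly_eq_add {n : ℕ} (hn : n ≠ 0) :
    Fintype.card k ^ n ≤ {α : K | (minpoly k α).natDegree = n}.ncard +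
      ∑ ℓ ∈ n.primeFactors, Fintype.card k ^ (n / ℓ) := by
  have hcover : (X ^ Fintype.card k ^ n - X : k[X]).rootSet K ⊆
      {α : K | (minpoly k α).natDegree = n} ∪
        ⋃ ℓ ∈ n.primeFactors, (X ^ Fintype.card k ^ (n / ℓ) - X : k[X]).rootSet K := by
    intro α hα
    rw [mem_rootSet_X_pow_card_pow_sub_X_iff k K hn] at hα
    by_cases hdeg : (minpoly k α).natDegree = n
    · exact Or.inl hdeg
    obtain ⟨ℓ, hℓ, hdvd⟩ := Nat.exists_mem_primeFactors_dvd_div hn hα hdeg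
    refine Or.inr (Set.mem_biUnion hℓ ?_)
    exact (mem_rootSet_X_pow_card_pow_sub_X_iff k K (Nat.div_ne_zero_of_mem_primeFactors hℓ) α).2
      hdvd
  have hfin : ({α : K | (minpoly k α).natDegree = n} ∪
      ⋃ ℓ ∈ n.primeFactors,
        (X ^ Fintype.card k ^ (n / ℓ) - X : k[X]).rootSet K).Finite := by
    refine Set.Finite.union ((rootSet_finite (X ^ Fintype.card k ^ n - X : k[X]) K).subset ?_)
      (n.primeFactors.finite_toSet.biUnion fun _ _ => rootSet_finite _ K)
    intro α (hα : (minpoly k α).natDegree = n)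
    exact (mem_rootSet_X_pow_card_pow_sub_X_iff k K hn α).2 hα.dvd
  calc Fintype.card k ^ n = ((X ^ Fintype.card k ^ n - X : k[X]).rootSet K).ncard :=
        (ncard_rootSet_X_pow_card_pow_sub_X k K hn).symm
    _ ≤ _ := Set.ncard_le_ncard hcover hfin
    _ ≤ _ := Set.ncard_union_le _ _
    _ ≤ _ := Nat.add_le_add_left (n.primeFactors.set_ncard_biUnion_le _) _
    _ = _ := by
      congr 1
      refine Finset.sum_congr rfl fun ℓ hℓ => ?_
      exact ncard_rootSet_X_pow_card_pow_sub_X k K (Nat.div_ne_zero_of_mem_primeFactors hℓ)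

end FiniteField

open FiniteField in
theorem stmt_2_general (k : Type*) [Field k] [Fintype k] (d q : ℕ) (hd : 0 < d) (hq : q.Prime) :
    {f : Polynomial k | f.Monic ∧ Irreducible f ∧ f.natDegree = q}.ncard ≤
      {f : Polynomial k | f.Monic ∧ Irreducible f ∧ f.natDegree = d * q}.ncard := by
  obtain rfl | hd2 : d = 1 ∨ 2 ≤ d := by omega
  · rw [one_mul]
  set K := AlgebraicClosure k
  have hdq : d * q ≠ 0 := mul_ne_zero (by omega) hq.ne_zero
  have hq_count := ncard_setOf_natDegree_minpoly_eq k K hq.ne_zero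
  rw [ncard_setOf_natDegree_minpoly_eq_prime k K hq] at hq_count
  have hdq_count := ncard_setOf_natDegree_minpoly_eq k K hdq
  have hlower := card_pow_le_ncard_setOf_natDegree_minpoly_eq_add k K hdq
  have hnum := Nat.mul_pow_add_sum_primeFactors_le (Fintype.one_lt_card (α := k)) hd2 hq
  refine Nat.le_of_mul_le_mul_left ?_ (Nat.pos_of_ne_zero hdq)
  calc d * q * {f : k[X] | f.Monic ∧ Irreducible f ∧ f.natDegree = q}.ncard
      = d * (Fintype.card k ^ q - Fintype.card k) := by rw [hq_count, mul_assoc]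
    _ ≤ d * Fintype.card k ^ q := Nat.mul_le_mul_left d (Nat.sub_le _ _)
    _ ≤ _ := by omega

/-- Lemma 3.3(3): for a finite field `k` with `c` elements and characteristic `p`,
a positive integer `d`, and a prime `q` coprime to `p` and `d`, the number of monic
irreducible polynomials of degree `d * q` in `k[X]` is at least the number of monic
irreducible polynomials of degree `q`. -/
theorem stmt_2 (k : Type*) [Field k] [Fintype k] (c p d q : ℕ)
    (hc : Fintype.card k = c) [CharP k p] (hd : 0 < d) (hq : q.Prime)
    (hqp : Nat.Coprime q p) (hqd : Nat.Coprime q d) :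
    {f : Polynomial k | f.Monic ∧ Irreducible f ∧ f.natDegree = q}.ncard ≤
      {f : Polynomial k | f.Monic ∧ Irreducible f ∧ f.natDegree = d * q}.ncard :=
  stmt_2_general k d q hd hq
end

section
/- Let c ≥ 2 be an integer and let d and q be positive integers. Then φ(c^{dq} − 1) ≥ d · φ(c^q − 1), where φ denotes Euler's totient function. -/
/-- The key arithmetic inequality in the proof of Lemma 3.3(3):
for an integer `c ≥ 2` and positive integers `d`, `q`, one has
`φ(c^(d*q) - 1) ≥ d * φ(c^q - 1)`. -/
theorem stmt_4 (c d q : ℕ) (hc : 2 ≤ c) (hd : 0 < d) (hq : 0 < q) :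
    d * Nat.totient (c ^ q - 1) ≤ Nat.totient (c ^ (d * q) - 1) := by
  set b := c ^ q with hbdef
  have hb : 2 ≤ b := by
    calc 2 = 2 ^ 1 := rfl
    _ ≤ 2 ^ q := Nat.pow_le_pow_right (by norm_num) hq
    _ ≤ c ^ q := Nat.pow_le_pow_left hc q
  have hpow : c ^ (d * q) = b ^ d := by rw [hbdef, ← pow_mul, mul_comm]
  rw [hpow]
  set m := b - 1 with hmdef
  set M := b ^ d - 1 with hMdef
  have hm1 : 1 ≤ m := by omega
  have hbd : b ≤ b ^ d := Nat.le_self_pow hd.ne' b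
  have hM1 : 1 ≤ M := by omega
  have hdvd : m ∣ M := by
    simpa only [one_pow] using Nat.sub_dvd_pow_sub_pow b 1 d
  haveI : NeZero M := ⟨by omega⟩
  haveI : NeZero m := ⟨by omega⟩
  -- the unit `b` in `ZMod M`
  have hbM : (b : ZMod M) ^ d = 1 := by
    have : ((b ^ d : ℕ) : ZMod M) = ((M + 1 : ℕ) : ZMod M) := by
      congr 1; omega
    push_cast at this
    simpa [ZMod.natCast_self] using this
  have hne : ∀ j, 0 < j → j < d → (b : ZMod M) ^ j ≠ 1 := by
    intro j hj0 hjd h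
    have h1 : ((b ^ j - 1 : ℕ) : ZMod M) = 0 := by
      have hb1 : 1 ≤ b ^ j := Nat.one_le_pow _ _ (by omega)
      push_cast [Nat.cast_sub hb1]
      rw [← h]; ring
    have h2 : M ∣ b ^ j - 1 := (ZMod.natCast_eq_zero_iff _ _).mp h1
    have h3 : b ^ j < b ^ d := Nat.pow_lt_pow_right (by omega) hjd
    have h4 : 0 < b ^ j - 1 := by
      have : 2 ≤ b ^ j := le_trans hb (Nat.le_self_pow hj0.ne' b)
      omega
    have := Nat.le_of_dvd h4 h2
    omega
  have hu : (b : ZMod M) * (b : ZMod M) ^ (d - 1) = 1 := by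
    rw [← pow_succ']
    have : d - 1 + 1 = d := by omega
    rw [this]; exact hbM
  set u : (ZMod M)ˣ := ⟨(b : ZMod M), (b : ZMod M) ^ (d - 1), hu, by
    rw [mul_comm]; exact hu⟩ with hudef
  have hord : orderOf u = d := by
    rw [orderOf_eq_iff hd]
    constructor
    · ext; simpa [hudef] using hbM
    · intro j hjd hj0 h
      exact hne j hj0 hjd (by simpa [hudef] using congrArg Units.val h)
  -- the reduction map
  set f := ZMod.unitsMap hdvd with hfdef
  have hker : u ∈ f.ker := by
    rw [MonoidHom.mem_ker]
    ext
    have hcast : (f u : ZMod m) = ((b : ℕ) : ZMod m) := by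
      simp only [hfdef, ZMod.unitsMap_def, Units.coe_map, RingHom.toMonoidHom_eq_coe,
        MonoidHom.coe_coe, hudef]
      exact map_natCast (ZMod.castHom hdvd (ZMod m)) b
    rw [hcast, Units.val_one]
    have : ((b : ℕ) : ZMod m) = ((m + 1 : ℕ) : ZMod m) := by congr 1; omega
    rw [this]; push_cast [ZMod.natCast_self]; ring
  -- counting
  have hcard : Nat.card (ZMod M)ˣ = Nat.card f.ker * Nat.card (ZMod m)ˣ := by
    have e1 := Subgroup.card_eq_card_quotient_mul_card_subgroup f.ker
    have e2 : Nat.card ((ZMod M)ˣ ⧸ f.ker) = Nat.card (ZMod m)ˣ :=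
      Nat.card_congr (QuotientGroup.quotientKerEquivOfSurjective f
        (ZMod.unitsMap_surjective hdvd)).toEquiv
    rw [e1, e2, mul_comm]
  have hdk : d ∣ Nat.card f.ker := by
    rw [← hord]
    exact Subgroup.orderOf_dvd_natCard f.ker hker
  have hkpos : 0 < Nat.card f.ker := Nat.card_pos
  have hdle : d ≤ Nat.card f.ker := Nat.le_of_dvd hkpos hdk
  have htM : Nat.card (ZMod M)ˣ = M.totient := by
    rw [Nat.card_eq_fintype_card, ZMod.card_units_eq_totient]
  have htm : Nat.card (ZMod m)ˣ = m.totient := by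
    rw [Nat.card_eq_fintype_card, ZMod.card_units_eq_totient]
  calc d * m.totient ≤ Nat.card f.ker * m.totient := Nat.mul_le_mul_right _ hdle
  _ = Nat.card f.ker * Nat.card (ZMod m)ˣ := by rw [htm]
  _ = Nat.card (ZMod M)ˣ := hcard.symm
  _ = M.totient := htM
end

section
/- Let K ⊆ L be an extension of finite fields. Then for every element ξ of the multiplicative group K× that generates K× (as a cyclic group), there exists an element ζ of L× that generates L× (as a cyclic group) and whose norm from L to K equals ξ. -/
/-!
The norm `Lˣ → Kˣ` of an extension of finite fields is a surjective homomorphism of finite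
cyclic groups, and any surjection `f : G → H` of finite cyclic groups maps some generator onto
any prescribed generator. Indeed, if `g` generates `G` and `h = f g ^ k`, then `k` is prime to
`|H|`, which divides `|G|`; the units of `ZMod |G|` surject onto those of `ZMod |H|`, so `k` is
congruent mod `|H|` to some `k'` prime to `|G|`, and `g ^ k'` is the generator sought.
-/

open Subgroup

theorem Nat.exists_coprime_modEq_of_dvd {d n k : ℕ} (hn : n ≠ 0) (hdn : d ∣ n)
    (hk : k.Coprime d) : ∃ k', k'.Coprime n ∧ k' ≡ k [MOD d] := by
  have : NeZero n := ⟨hn⟩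
  obtain ⟨u, hu⟩ := ZMod.unitsMap_surjective hdn (ZMod.unitOfCoprime k hk)
  refine ⟨(u : ZMod n).val, ZMod.val_coe_unit_coprime u, ?_⟩
  have hcast := congrArg Units.val hu
  rw [ZMod.unitsMap_val, ZMod.coe_unitOfCoprime] at hcast
  rw [← ZMod.natCast_eq_natCast_iff, ZMod.natCast_val, hcast]

section

variable {G : Type*} [Group G]

theorem Nat.Coprime.of_orderOf_pow_eq {x : G} {k : ℕ} (hx : orderOf x ≠ 0)
    (h : orderOf (x ^ k) = orderOf x) : (orderOf x).Coprime k := by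
  rw [(orderOf_ne_zero_iff.mp hx).orderOf_pow, Nat.div_eq_self] at h
  exact h.resolve_left hx

theorem forall_mem_zpowers_iff_orderOf_eq_card [Finite G] {g : G} :
    (∀ x, x ∈ zpowers g) ↔ orderOf g = Nat.card G :=
  ⟨orderOf_eq_card_of_forall_mem_zpowers, fun h ↦
    (zpowers g).eq_top_iff'.mp <| eq_top_of_card_eq _ <| by rw [Nat.card_zpowers, h]⟩

theorem MonoidHom.exists_forall_mem_zpowers_map_eq {H : Type*} [Group H] [IsCyclic G]
    [Finite G] {f : G →* H} (hf : Function.Surjective f) {h : H}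
    (hh : ∀ y, y ∈ zpowers h) : ∃ g, (∀ x, x ∈ zpowers g) ∧ f g = h := by
  have : Finite H := Finite.of_surjective f hf
  obtain ⟨g, hg⟩ := IsCyclic.exists_generator (α := G)
  have hfg : ∀ y, y ∈ zpowers (f g) := by
    intro y
    obtain ⟨x, rfl⟩ := hf y
    obtain ⟨i, rfl⟩ := hg x
    exact ⟨i, (map_zpow f g i).symm⟩
  obtain ⟨k, rfl⟩ : h ∈ Submonoid.powers (f g) := mem_powers_iff_mem_zpowers.mpr (hfg h)
  have hk : (orderOf (f g)).Coprime k := .of_orderOf_pow_eq (orderOf_pos (f g)).ne' <| by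
    rw [forall_mem_zpowers_iff_orderOf_eq_card.mp hh,
      forall_mem_zpowers_iff_orderOf_eq_card.mp hfg]
  obtain ⟨k', hk'g, hk'k⟩ :=
    Nat.exists_coprime_modEq_of_dvd (orderOf_pos g).ne' (orderOf_map_dvd f g) hk.symm
  refine ⟨g ^ k', ?_, ?_⟩
  · rw [forall_mem_zpowers_iff_orderOf_eq_card, hk'g.symm.orderOf_pow,
      forall_mem_zpowers_iff_orderOf_eq_card.mp hg]
  · rw [map_pow]
    exact pow_eq_pow_iff_modEq.mpr hk'k

end

theorem stmt_5_general (K L : Type*) [Field K] [Field L] [Algebra K L]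
    [Fintype L]
    (ξ : Kˣ) (hξ : ∀ x : Kˣ, x ∈ Subgroup.zpowers ξ) :
    ∃ ζ : Lˣ, (∀ y : Lˣ, y ∈ Subgroup.zpowers ζ) ∧
      Algebra.norm K (ζ : L) = (ξ : K) := by
  obtain ⟨ζ, hζ, hNζ⟩ :=
    MonoidHom.exists_forall_mem_zpowers_map_eq (FiniteField.unitsMap_norm_surjective K L) hξ
  exact ⟨ζ, hζ, congrArg Units.val hNζ⟩

/-- From the proof of Lemma 3.3: for an extension `K ⊆ L` of finite fields, every
generator `ξ` of the cyclic group `K×` is the norm of some generator `ζ` of `L×`. -/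
theorem stmt_5 (K L : Type*) [Field K] [Field L] [Algebra K L]
    [Fintype K] [Fintype L]
    (ξ : Kˣ) (hξ : ∀ x : Kˣ, x ∈ Subgroup.zpowers ξ) :
    ∃ ζ : Lˣ, (∀ y : Lˣ, y ∈ Subgroup.zpowers ζ) ∧
      Algebra.norm K (ζ : L) = (ξ : K) :=
  stmt_5_general K L ξ hξ
end

section
/- Let k be a finite field and let L₁, …, Lₙ be finitely many finite field extensions of k. Then there exists a natural number N such that for every prime number q ≥ N and every field extension M of k with [M : k] = q, there exists a surjective k-algebra homomorphism from the polynomial ring k[t] onto the product algebra ∏_{i=1}^{n} (Lᵢ ⊗_k M). -/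
/-!
Once `q` exceeds every `[Lᵢ : k]`, the degrees of `Lᵢ` and `M` are coprime, so `Lᵢ` and `M`
are linearly disjoint and `Fᵢ := Lᵢ ⊗ M` is a field of degree `mᵢ = [Lᵢ : k] q`. A non-primitive
element of a degree `m` extension of `k = 𝔽_r` lies in a subfield with at most `r ^ (m / 2)`
elements, so there are at least `r ^ m - (m / 2) r ^ (m / 2)` primitive elements, and each
minimal polynomial has at most `m` roots. For `q` large every `Fᵢ` therefore has more than `n`
distinct minimal polynomials of primitive elements; Hall's theorem picks primitive `xᵢ ∈ Fᵢ`
with pairwise distinct, hence coprime, minimal polynomials, and the Chinese remainder theorem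
makes `t ↦ (xᵢ)ᵢ` surjective.
-/

open Module Polynomial TensorProduct Filter Finset

theorem Nat.le_div_two_of_dvd_of_lt {d m : ℕ} (h : d ∣ m) (hlt : d < m) : d ≤ m / 2 := by
  obtain ⟨c, rfl⟩ := h
  have : 2 ≤ c := by
    by_contra hc
    interval_cases c <;> simp at hlt
  rw [Nat.le_div_iff_mul_le two_pos]
  nlinarith

theorem eventually_mul_add_lt_pow {r : ℕ} (hr : 1 < r) (n : ℕ) :
    ∀ᶠ m in atTop, m * n + m / 2 * r ^ (m / 2) < r ^ m := by
  have hlin : ∀ᶠ t : ℕ in atTop, 3 * (n + 1) * t < 2 ^ t := by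
    have := (tendsto_order.1 (tendsto_pow_const_div_const_pow_of_one_lt 1 one_lt_two)).2
      (1 / (3 * (n + 1) : ℝ)) (by positivity)
    filter_upwards [this] with t ht
    rw [pow_one, div_lt_div_iff₀ (by positivity) (by positivity), one_mul] at ht
    exact_mod_cast (by linarith : (3 * (n + 1) * t : ℝ) < 2 ^ t)
  filter_upwards [(Nat.tendsto_div_const_atTop two_ne_zero).eventually hlin,
    eventually_ge_atTop 2] with m hm hm2
  set t := m / 2
  have hmt : m ≤ 3 * t := by omega
  have htm : t ≤ m - t := by omega
  have hrt : 1 ≤ r ^ t := Nat.one_le_pow _ _ (by omega)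
  calc m * n + t * r ^ t ≤ 3 * t * n * r ^ t + 3 * t * r ^ t :=
        Nat.add_le_add ((Nat.mul_le_mul_right n hmt).trans (Nat.le_mul_of_pos_right _ hrt))
          (Nat.mul_le_mul_right _ (by omega))
    _ = 3 * (n + 1) * t * r ^ t := by ring
    _ < 2 ^ t * r ^ t := Nat.mul_lt_mul_of_pos_right hm (by omega)
    _ ≤ r ^ (m - t) * r ^ t :=
        Nat.mul_le_mul_right _
          ((Nat.pow_le_pow_left hr t).trans (Nat.pow_le_pow_right (by omega) htm))
    _ = r ^ m := by rw [← pow_add, Nat.sub_add_cancel (Nat.div_le_self m 2)]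

theorem Finset.exists_injective_forall_mem_of_card_le {ι α : Type*} [Fintype ι] [DecidableEq α]
    (t : ι → Finset α) (h : ∀ i, Fintype.card ι ≤ #(t i)) :
    ∃ f : ι → α, Function.Injective f ∧ ∀ i, f i ∈ t i := by
  refine (all_card_le_biUnion_card_iff_exists_injective t).1 fun s => ?_
  obtain rfl | ⟨i, hi⟩ := s.eq_empty_or_nonempty
  · simp
  · exact (card_le_univ s).trans ((h i).trans (card_le_card (subset_biUnion_of_mem t hi)))

theorem minpoly.isCoprime_of_ne {k A B : Type*} [Field k] [Ring A] [IsDomain A] [Algebra k A]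
    [Ring B] [IsDomain B] [Algebra k B] {x : A} {y : B} (hx : IsIntegral k x) (hy : IsIntegral k y)
    (h : minpoly k x ≠ minpoly k y) : IsCoprime (minpoly k x) (minpoly k y) :=
  (minpoly.irreducible hx).coprime_iff_not_dvd.2 fun hdvd => h <|
    eq_of_monic_of_associated (minpoly.monic hx) (minpoly.monic hy)
      ((minpoly.irreducible hx).associated_of_dvd (minpoly.irreducible hy) hdvd)

theorem Polynomial.surjective_pi_aeval {k ι : Type*} [Field k] [Finite ι] {A : ι → Type*}
    [∀ i, Ring (A i)] [∀ i, Algebra k (A i)] (x : ∀ i, A i)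
    (hx : ∀ i, Function.Surjective (aeval (R := k) (x i)))
    (hcop : Pairwise fun i j => IsCoprime (minpoly k (x i)) (minpoly k (x j))) :
    Function.Surjective (AlgHom.pi fun i => aeval (R := k) (x i)) := by
  intro y
  choose p hp using fun i => hx i (y i)
  obtain ⟨r, hr⟩ := Ideal.exists_forall_sub_mem_ideal
    (I := fun i => Ideal.span {minpoly k (x i)})
    (fun i j hij => (Ideal.isCoprime_span_singleton_iff _ _).2 (hcop hij)) p
  refine ⟨r, ?_⟩
  funext i
  have hker : r - p i ∈ RingHom.ker (aeval (R := k) (x i)) := by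
    rw [minpoly.ker_aeval_eq_span_minpoly]
    exact hr i
  rw [RingHom.mem_ker, map_sub, sub_eq_zero] at hker
  simp [hker, hp]

theorem aeval_surjective_of_natDegree_minpoly_eq {k F : Type*} [Field k] [Field F] [Algebra k F]
    [FiniteDimensional k F] {x : F} (hx : (minpoly k x).natDegree = finrank k F) :
    Function.Surjective (aeval (R := k) x) := by
  rw [← AlgHom.range_eq_top, ← Algebra.adjoin_singleton_eq_range_aeval]
  exact Algebra.adjoin_eq_top_of_primitive_element (.of_finite k x)
    ((Field.primitive_element_iff_minpoly_natDegree_eq k x).2 hx)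

theorem Algebra.TensorProduct.isField_of_finrank_coprime (k L M : Type*) [Field k] [Field L]
    [Field M] [Algebra k L] [Algebra k M] [Algebra.IsAlgebraic k L]
    (h : (finrank k L).Coprime (finrank k M)) : IsField (L ⊗[k] M) := by
  let f : L →ₐ[k] AlgebraicClosure M := IsAlgClosed.lift
  let g : M →ₐ[k] AlgebraicClosure M := IsScalarTower.toAlgHom k M _
  refine IntermediateField.LinearDisjoint.isField_of_isAlgebraic' (fa := f) (fb := g)
    (.of_finrank_coprime ?_) (.inl ‹_›)
  convert h using 1
  · exact (AlgEquiv.ofInjectiveField f).toLinearEquiv.finrank_eq.symm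
  · exact (AlgEquiv.ofInjectiveField g).toLinearEquiv.finrank_eq.symm

section Counting

variable {k F : Type*} [Field k] [Field F] [Algebra k F]

theorem card_filter_minpoly_eq_le [DecidableEq k[X]] (s : Finset F) {f : k[X]} (hf : f ≠ 0) :
    #{x ∈ s | minpoly k x = f} ≤ f.natDegree := by
  classical
  calc #{x ∈ s | minpoly k x = f} ≤ #(f.aroots F).toFinset := by
        refine card_le_card fun x hx => ?_
        rw [mem_filter] at hx
        rw [Multiset.mem_toFinset, mem_aroots, ← hx.2]
        exact ⟨hx.2 ▸ hf, minpoly.aeval k x⟩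
    _ ≤ f.natDegree := (Multiset.toFinset_card_le _).trans (card_roots_map_le_natDegree _)

variable [Finite k] [FiniteDimensional k F] [Fintype F]

theorem card_filter_natDegree_minpoly_lt_le :
    #{x : F | (minpoly k x).natDegree < finrank k F} ≤
      finrank k F / 2 * Nat.card k ^ (finrank k F / 2) := by
  classical
  set m := finrank k F
  set r := Nat.card k
  have hr : 1 < r := Finite.one_lt_card
  calc #{x : F | (minpoly k x).natDegree < m}
      ≤ #((Icc 1 (m / 2)).biUnion fun d => ((X ^ r ^ d - X : k[X]).aroots F).toFinset) := by
        refine card_le_card fun x hx => ?_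
        rw [mem_filter] at hx
        have hint : IsIntegral k x := .of_finite k x
        set d := (minpoly k x).natDegree
        have hd : d ∈ Icc 1 (m / 2) :=
          mem_Icc.2 ⟨minpoly.natDegree_pos hint,
            Nat.le_div_two_of_dvd_of_lt (minpoly.degree_dvd hint) hx.2⟩
        -- `x` lies in the subfield with `r ^ d` elements, the fixed field of `Frob ^ d`
        have hdvd : minpoly k x ∣ X ^ r ^ d - X :=
          (minpoly.irreducible hint).natDegree_dvd_iff_dvd_X_pow_card_pow_sub_X.1 dvd_rfl
        refine mem_biUnion.2 ⟨d, hd, Multiset.mem_toFinset.2 (mem_aroots.2 ⟨?_, ?_⟩)⟩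
        · exact FiniteField.X_pow_card_pow_sub_X_ne_zero k (minpoly.natDegree_pos hint).ne' hr
        · exact aeval_eq_zero_of_dvd_aeval_eq_zero hdvd (minpoly.aeval k x)
    _ ≤ ∑ d ∈ Icc 1 (m / 2), #((X ^ r ^ d - X : k[X]).aroots F).toFinset := card_biUnion_le
    _ ≤ ∑ _d ∈ Icc 1 (m / 2), r ^ (m / 2) := by
        refine sum_le_sum fun d hd => ?_
        rw [mem_Icc] at hd
        calc #((X ^ r ^ d - X : k[X]).aroots F).toFinset
            ≤ (X ^ r ^ d - X : k[X]).natDegree :=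
              (Multiset.toFinset_card_le _).trans (card_roots_map_le_natDegree _)
          _ = r ^ d := FiniteField.X_pow_card_pow_sub_X_natDegree_eq k (by omega) hr
          _ ≤ r ^ (m / 2) := Nat.pow_le_pow_right hr.le hd.2
    _ = m / 2 * r ^ (m / 2) := by simp

end Counting

section PrimitiveMinpolys

variable (k F : Type*) [Field k] [Field F] [Algebra k F] [Fintype F]

open Classical in
noncomputable def primitiveMinpolys : Finset k[X] :=
  (univ.filter fun x : F => (minpoly k x).natDegree = finrank k F).image (minpoly k)

variable {k F}

theorem mem_primitiveMinpolys {f : k[X]} :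
    f ∈ primitiveMinpolys k F ↔
      ∃ x : F, (minpoly k x).natDegree = finrank k F ∧ minpoly k x = f := by
  classical
  simp [primitiveMinpolys]

theorem pow_finrank_le_card_primitiveMinpolys [Finite k] [FiniteDimensional k F] :
    Nat.card k ^ finrank k F ≤ finrank k F * #(primitiveMinpolys k F) +
      finrank k F / 2 * Nat.card k ^ (finrank k F / 2) := by
  classical
  set m := finrank k F
  have hprim : #{x : F | (minpoly k x).natDegree = m} ≤ m * #(primitiveMinpolys k F) := by
    refine card_le_mul_card_image _ m fun f hf => ?_
    obtain ⟨x, hx, rfl⟩ := mem_image.1 hf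
    exact (mem_filter.1 hx).2 ▸ card_filter_minpoly_eq_le _ (minpoly.ne_zero (.of_finite k x))
  have hnon : #{x : F | ¬(minpoly k x).natDegree = m} = #{x : F | (minpoly k x).natDegree < m} :=
    congrArg card (filter_congr fun x _ => (minpoly.natDegree_le x).lt_iff_ne.symm)
  calc Nat.card k ^ m = Fintype.card F :=
        natCard_eq_pow_finrank.symm.trans Nat.card_eq_fintype_card
    _ = _ := (card_filter_add_card_filter_not _).symm
    _ ≤ _ := add_le_add hprim (hnon ▸ card_filter_natDegree_minpoly_lt_le)

end PrimitiveMinpolys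

theorem exists_surjective_algHom_pi {k ι : Type*} [Field k] [Finite k] [Fintype ι]
    {F : ι → Type*} [∀ i, Field (F i)] [∀ i, Algebra k (F i)] [∀ i, FiniteDimensional k (F i)]
    (hF : ∀ i, finrank k (F i) * Fintype.card ι +
      finrank k (F i) / 2 * Nat.card k ^ (finrank k (F i) / 2) < Nat.card k ^ finrank k (F i)) :
    ∃ φ : k[X] →ₐ[k] ∀ i, F i, Function.Surjective φ := by
  classical
  have (i : ι) : Finite (F i) := Module.finite_of_finite k
  have := fun i => Fintype.ofFinite (F i)
  have hcard : ∀ i, Fintype.card ι ≤ #(primitiveMinpolys k (F i)) := fun i =>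
    (Nat.lt_of_mul_lt_mul_left
      ((Nat.add_lt_add_iff_right).1 ((hF i).trans_le pow_finrank_le_card_primitiveMinpolys))).le
  obtain ⟨f, hf, hmem⟩ := exists_injective_forall_mem_of_card_le _ hcard
  choose x hxdeg hxf using fun i => mem_primitiveMinpolys.1 (hmem i)
  refine ⟨_, surjective_pi_aeval x (fun i => aeval_surjective_of_natDegree_minpoly_eq (hxdeg i))
    fun i j hij => minpoly.isCoprime_of_ne (.of_finite k _) (.of_finite k _) ?_⟩
  rw [hxf, hxf]
  exact hf.ne hij

/-- Lemma 3.5(3): given a finite field `k` and finitely many finite field extensions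
`L₁, …, Lₙ` of `k`, there is `N` such that for every prime `q ≥ N` and every field
extension `M/k` of degree `q`, there is a surjective `k`-algebra homomorphism
`k[t] → ∏ i, (Lᵢ ⊗[k] M)`. -/
theorem stmt_6 (k : Type*) [Field k] [Fintype k] (n : ℕ) (L : Fin n → Type*)
    [∀ i, Field (L i)] [∀ i, Algebra k (L i)] [∀ i, FiniteDimensional k (L i)] :
    ∃ N : ℕ, ∀ q : ℕ, q.Prime → N ≤ q →
      ∀ (M : Type*) [Field M] [Algebra k M], Module.finrank k M = q →
        ∃ φ : Polynomial k →ₐ[k] (∀ i, TensorProduct k (L i) M),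
          Function.Surjective φ := by
  obtain ⟨N, hN⟩ :=
    eventually_atTop.1 (eventually_mul_add_lt_pow (Finite.one_lt_card (α := k)) n)
  refine ⟨N + ∑ i, finrank k (L i) + 1, fun q hq hqN M _ _ hM => ?_⟩
  have : FiniteDimensional k M := Module.finite_of_finrank_pos (hM ▸ hq.pos)
  have hlt (i : Fin n) : finrank k (L i) < q := by
    have := single_le_sum (fun j _ => Nat.zero_le (finrank k (L j))) (mem_univ i)
    omega
  let _ (i : Fin n) : Field (L i ⊗[k] M) :=
    (Algebra.TensorProduct.isField_of_finrank_coprime k (L i) M (hM ▸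
      ((hq.coprime_iff_not_dvd).2 (Nat.not_dvd_of_pos_of_lt finrank_pos (hlt i))).symm)).toField
  refine exists_surjective_algHom_pi fun i => ?_
  rw [Fintype.card_fin]
  apply hN
  rw [finrank_tensorProduct, hM]
  have := Nat.le_mul_of_pos_left q (finrank_pos (R := k) (M := L i))
  omega
end

section
/- Let k ⊆ κ be finite fields, let B be a finite étale κ-algebra (a finite product of finite field extensions of κ) that admits a κ-algebra homomorphism B → κ, and let I be a nonzero ideal of the polynomial ring κ[t]. Then there exists a natural number N such that for all distinct prime numbers q₁, q₂ ≥ N and all field extensions k₁, k₂ of k with [k₁ : k] = q₁ and [k₂ : k] = q₂, there exists a surjective κ-algebra homomorphism φ : κ[t] → (B ⊗_k k₁) × (B ⊗_k k₂) whose kernel is comaximal with I, i.e. ker φ + I = κ[t]. -/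
/-!
Splitting along its maximal ideals, `B ⊗[k] kⱼ` is a product of at most `[B : κ]` finite fields,
each of `κ`-degree divisible by `qⱼ`: such a field contains both `κ` and `kⱼ`, and the prime `qⱼ`
exceeds `[κ : k]`. It is reduced because `kⱼ / k` is separable. By the Chinese remainder theorem, a
surjection `κ[t] → ∏ Kᵢ` whose kernel is comaximal with `I = (g)` comes from generators `αᵢ` of the
fields `Kᵢ` with pairwise distinct minimal polynomials, none of them dividing `g`. In a field of
degree `e` over `κ = 𝔽_Q`, at most `e Q^(e/2)` elements lie in a proper subfield, at most `e` have
a prescribed minimal polynomial and at most `deg g` are roots of `g`. Once `e ≥ min qⱼ` is large,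
these exceptions miss most of the `Q^e` elements, so the generators can be chosen field by field.
-/

open Polynomial IntermediateField Module Finset TensorProduct

universe u

theorem exists_forall_le_mul_pow_half_add_lt_pow (Q c : ℕ) (hQ : 2 ≤ Q) :
    ∃ N, ∀ e, N ≤ e → e * (Q ^ (e / 2) + c) + c < Q ^ e := by
  -- for `j = e / 4 ≥ 8 (c + 1)`, the bound `j ^ 2 < 2 ^ (e / 2)` beats `(e + 1) (c + 1)`
  refine ⟨4 * (8 * (c + 1) + 1), fun e he => ?_⟩
  set m := e / 2
  have hlin : (e + 1) * (c + 1) ≤ 2 ^ m := by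
    set j := m / 2
    have hsq : j * j < 2 ^ m := calc
      j * j < 2 ^ j * 2 ^ j := Nat.mul_self_lt_mul_self Nat.lt_two_pow_self
      _ = 2 ^ (j + j) := (pow_add _ _ _).symm
      _ ≤ 2 ^ m := Nat.pow_le_pow_right two_pos (by omega)
    have hj : 8 * (c + 1) ≤ j := by omega
    have he : e + 1 ≤ 8 * j := by omega
    nlinarith
  have hQm : 1 ≤ Q ^ m := Nat.one_le_pow _ _ (by omega)
  have hc : (e + 1) * c ≤ (e + 1) * c * Q ^ m := Nat.le_mul_of_pos_right _ hQm
  calc e * (Q ^ m + c) + c < (e + 1) * (c + 1) * Q ^ m := by nlinarith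
    _ ≤ 2 ^ m * Q ^ m := Nat.mul_le_mul_right _ hlin
    _ ≤ Q ^ m * Q ^ m := Nat.mul_le_mul_right _ (Nat.pow_le_pow_left hQ m)
    _ ≤ Q ^ e := by rw [← pow_add]; exact Nat.pow_le_pow_right (by omega) (by omega)

theorem Nat.le_div_two_of_mem_properDivisors {j n : ℕ} (hj : j ∈ n.properDivisors) :
    j ≤ n / 2 := by
  obtain ⟨⟨c, rfl⟩, hlt⟩ := Nat.mem_properDivisors.1 hj
  have hc : 2 ≤ c := by
    rcases c with _ | _ | c
    all_goals simp_all
  exact (Nat.le_div_iff_mul_le two_pos).2 (Nat.mul_le_mul_left j hc)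

section Counting

variable {κ F : Type*} [Field κ] [Field F] [Algebra κ F]

open Classical in
theorem card_aroots_toFinset_le (p : κ[X]) : (p.aroots F).toFinset.card ≤ p.natDegree :=
  (Multiset.toFinset_card_le _).trans ((card_roots' _).trans natDegree_map_le)

variable [Fintype F]

theorem pow_card_pow_finrank_adjoin_simple [Fintype κ] (α : F) :
    α ^ Fintype.card κ ^ finrank κ κ⟮α⟯ = α := by
  have : Fintype κ⟮α⟯ := Fintype.ofFinite _
  have h := FiniteField.pow_card (⟨α, mem_adjoin_simple_self κ α⟩ : κ⟮α⟯)
  rw [Module.card_eq_pow_finrank (K := κ)] at h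
  exact congrArg Subtype.val h

theorem finrank_adjoin_simple_mem_properDivisors {α : F} (hα : κ⟮α⟯ ≠ ⊤) :
    finrank κ κ⟮α⟯ ∈ (finrank κ F).properDivisors := by
  have hdvd : finrank κ κ⟮α⟯ ∣ finrank κ F := ⟨_, (finrank_mul_finrank κ κ⟮α⟯ F).symm⟩
  have hne : finrank κ κ⟮α⟯ ≠ finrank κ F := by
    rwa [adjoin.finrank (IsIntegral.of_finite κ α), Ne,
      ← Field.primitive_element_iff_minpoly_natDegree_eq]
  exact Nat.mem_properDivisors.2 ⟨hdvd, (Nat.le_of_dvd finrank_pos hdvd).lt_of_ne hne⟩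

open Classical in
theorem card_filter_adjoin_simple_ne_top_le [Fintype κ] :
    #{α : F | κ⟮α⟯ ≠ ⊤} ≤ finrank κ F * Fintype.card κ ^ (finrank κ F / 2) := by
  set e := finrank κ F
  set Q := Fintype.card κ
  have hsub : ({α : F | κ⟮α⟯ ≠ ⊤} : Finset F) ⊆
      e.properDivisors.biUnion fun j => ((X ^ Q ^ j - X : F[X]).roots.toFinset) := by
    intro α hα
    have hj := finrank_adjoin_simple_mem_properDivisors (mem_filter.1 hα).2
    refine mem_biUnion.2 ⟨_, hj, ?_⟩
    rw [Multiset.mem_toFinset, mem_roots (FiniteField.X_pow_card_pow_sub_X_ne_zero F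
      (Nat.pos_of_mem_properDivisors hj).ne' Fintype.one_lt_card)]
    simp [pow_card_pow_finrank_adjoin_simple]
  refine (card_le_card hsub).trans ?_
  refine (card_biUnion_le_card_mul _ _ (Q ^ (e / 2)) fun j hj => ?_).trans
    (Nat.mul_le_mul_right _ ?_)
  · calc _ ≤ (X ^ Q ^ j - X : F[X]).natDegree :=
          (Multiset.toFinset_card_le _).trans (card_roots' _)
      _ = Q ^ j := FiniteField.X_pow_card_pow_sub_X_natDegree_eq F
          (Nat.pos_of_mem_properDivisors hj).ne' Fintype.one_lt_card
      _ ≤ Q ^ (e / 2) := Nat.pow_le_pow_right Fintype.card_pos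
          (Nat.le_div_two_of_mem_properDivisors hj)
  · exact (card_le_card fun j hj => mem_range.2 (Nat.mem_properDivisors.1 hj).2).trans
      (card_range e).le

open Classical in
theorem card_filter_minpoly_eq_le_s8 (p : κ[X]) : #{α : F | minpoly κ α = p} ≤ finrank κ F := by
  rcases eq_empty_or_nonempty {α : F | minpoly κ α = p} with h | ⟨α₀, hα₀⟩
  · simp [h]
  have hsub : ({α : F | minpoly κ α = p} : Finset F) ⊆ (p.aroots F).toFinset := fun α hα => by
    rw [Multiset.mem_toFinset, mem_aroots, ← (mem_filter.1 hα).2]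
    exact ⟨minpoly.ne_zero (IsIntegral.of_finite κ α), minpoly.aeval κ α⟩
  calc _ ≤ p.natDegree := (card_le_card hsub).trans (card_aroots_toFinset_le p)
    _ ≤ finrank κ F := (mem_filter.1 hα₀).2 ▸ minpoly.natDegree_le α₀

open Classical in
theorem card_filter_minpoly_dvd_le {g : κ[X]} (hg : g ≠ 0) :
    #{α : F | minpoly κ α ∣ g} ≤ g.natDegree := by
  refine (card_le_card fun α hα => ?_).trans (card_aroots_toFinset_le g)
  rw [Multiset.mem_toFinset, mem_aroots, ← minpoly.dvd_iff]
  exact ⟨hg, (mem_filter.1 hα).2⟩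

theorem exists_adjoin_simple_eq_top_minpoly_notMem_not_dvd [Fintype κ] (S : Finset κ[X])
    {g : κ[X]} (hg : g ≠ 0)
    (hcard : finrank κ F * (Fintype.card κ ^ (finrank κ F / 2) + #S) + g.natDegree <
      Fintype.card κ ^ finrank κ F) :
    ∃ α : F, κ⟮α⟯ = ⊤ ∧ minpoly κ α ∉ S ∧ ¬ minpoly κ α ∣ g := by
  classical
  set bad : Finset F := ({α | κ⟮α⟯ ≠ ⊤} : Finset F) ∪
    S.biUnion (fun p => ({α | minpoly κ α = p} : Finset F)) ∪ ({α | minpoly κ α ∣ g} : Finset F)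
  have hbad : #bad < #(Finset.univ : Finset F) := calc
    #bad ≤ finrank κ F * Fintype.card κ ^ (finrank κ F / 2) + #S * finrank κ F + g.natDegree :=
      (card_union_le _ _).trans <| add_le_add ((card_union_le _ _).trans <|
        add_le_add card_filter_adjoin_simple_ne_top_le <|
          card_biUnion_le_card_mul _ _ _ fun p _ => card_filter_minpoly_eq_le_s8 p)
        (card_filter_minpoly_dvd_le hg)
    _ = finrank κ F * (Fintype.card κ ^ (finrank κ F / 2) + #S) + g.natDegree := by ring
    _ < Fintype.card κ ^ finrank κ F := hcard
    _ = #(Finset.univ : Finset F) := by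
      rw [card_univ, Module.card_eq_pow_finrank (K := κ) (V := F)]
  obtain ⟨α, -, hα⟩ := exists_mem_notMem_of_card_lt_card hbad
  simp only [bad, mem_union, mem_filter, mem_univ, true_and, mem_biUnion, not_or] at hα
  exact ⟨α, not_not.1 hα.1.1, fun h => hα.1.2 ⟨_, h, rfl⟩, hα.2⟩

end Counting

theorem RingHom.pi_surjective_of_pairwise_isCoprime {R ι : Type*} [CommRing R]
    [_root_.Finite ι] {S : ι → Type*} [∀ i, Ring (S i)] (f : ∀ i, R →+* S i)
    (hf : ∀ i, Function.Surjective (f i))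
    (hcop : Pairwise fun i j => IsCoprime (RingHom.ker (f i)) (RingHom.ker (f j))) :
    Function.Surjective (RingHom.pi f) := by
  intro y
  choose x hx using fun i => hf i (y i)
  obtain ⟨z, hz⟩ := Ideal.quotientInfToPiQuotient_surj hcop fun i => Ideal.Quotient.mk _ (x i)
  obtain ⟨r, rfl⟩ := Ideal.Quotient.mk_surjective z
  refine ⟨r, funext fun i => ?_⟩
  have hri := congrFun hz i
  rw [Ideal.quotientInfToPiQuotient_mk, Ideal.Quotient.eq, RingHom.mem_ker, map_sub,
    sub_eq_zero] at hri
  rwa [← hx i]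

section Generators

variable {κ : Type*} [Field κ]

theorem isCoprime_minpoly_of_ne {K L : Type*} [Field K] [Field L] [Algebra κ K] [Algebra κ L]
    {x : K} {y : L} (hx : IsIntegral κ x) (hy : IsIntegral κ y)
    (hxy : minpoly κ x ≠ minpoly κ y) : IsCoprime (minpoly κ x) (minpoly κ y) :=
  ((minpoly.irreducible hx).coprime_iff_not_dvd).2 fun h => hxy <|
    eq_of_monic_of_associated (minpoly.monic hx) (minpoly.monic hy)
      ((minpoly.irreducible hx).associated_of_dvd (minpoly.irreducible hy) h)

variable {ι : Type*} {K : ι → Type*} [∀ i, Field (K i)] [∀ i, Algebra κ (K i)]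
  [∀ i, FiniteDimensional κ (K i)]

theorem surjective_piAlgHom_aeval [Finite ι] {α : ∀ i, K i} (hgen : ∀ i, κ⟮α i⟯ = ⊤)
    (hinj : Function.Injective fun i => minpoly κ (α i)) :
    Function.Surjective (AlgHom.pi fun i => aeval (R := κ) (α i)) := by
  refine RingHom.pi_surjective_of_pairwise_isCoprime
    (fun i => (aeval (R := κ) (α i)).toRingHom) (fun i => ?_) fun i j hij => ?_
  · change Function.Surjective (aeval (α i))
    rw [← AlgHom.range_eq_top, ← Algebra.adjoin_singleton_eq_range_aeval,
      ← adjoin_simple_toSubalgebra_of_isAlgebraic (IsAlgebraic.of_finite κ (α i)), hgen i,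
      top_toSubalgebra]
  · simp only [AlgHom.toRingHom_eq_coe, RingHom.ker_coe_toRingHom,
      minpoly.ker_aeval_eq_span_minpoly]
    exact (Ideal.isCoprime_span_singleton_iff _ _).2 <| isCoprime_minpoly_of_ne
      (IsIntegral.of_finite κ _) (IsIntegral.of_finite κ _) (hinj.ne hij)

theorem ker_piAlgHom_aeval_sup_span_eq_top [Fintype ι] {α : ∀ i, K i} {g : κ[X]}
    (hg : ∀ i, ¬ minpoly κ (α i) ∣ g) :
    RingHom.ker (AlgHom.pi fun i => aeval (R := κ) (α i)) ⊔ Ideal.span {g} = ⊤ := by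
  have hle : ⨅ i ∈ (Finset.univ : Finset ι), RingHom.ker (aeval (α i)) ≤
      RingHom.ker (AlgHom.pi fun i => aeval (R := κ) (α i)) := fun x hx =>
    funext fun i => (Submodule.mem_iInf _).1 ((Submodule.mem_iInf _).1 hx i) (mem_univ i)
  have hcop :
      Ideal.span {g} ⊔ ⨅ i ∈ (Finset.univ : Finset ι), RingHom.ker (aeval (α i)) = ⊤ :=
    Ideal.sup_iInf_eq_top fun i _ => by
      rw [minpoly.ker_aeval_eq_span_minpoly, ← Ideal.isCoprime_iff_sup_eq,
        Ideal.isCoprime_span_singleton_iff]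
      exact ((minpoly.irreducible (IsIntegral.of_finite κ (α i))).coprime_iff_not_dvd.2
        (hg i)).symm
  rw [eq_top_iff, ← hcop, sup_comm]
  exact sup_le_sup_right hle _

variable [Fintype κ] [Fintype ι] {g : κ[X]}

theorem exists_generators_minpoly_injective (hg : g ≠ 0)
    (hcard : ∀ i, finrank κ (K i) * (Fintype.card κ ^ (finrank κ (K i) / 2) + Fintype.card ι)
      + g.natDegree < Fintype.card κ ^ finrank κ (K i)) :
    ∃ α : ∀ i, K i, (∀ i, κ⟮α i⟯ = ⊤ ∧ ¬ minpoly κ (α i) ∣ g) ∧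
      Function.Injective fun i => minpoly κ (α i) := by
  classical
  suffices ∀ s : Finset ι, ∃ α : ∀ i, K i, (∀ i ∈ s, κ⟮α i⟯ = ⊤ ∧ ¬ minpoly κ (α i) ∣ g) ∧
      Set.InjOn (fun i => minpoly κ (α i)) s by
    obtain ⟨α, hgood, hinj⟩ := this univ
    exact ⟨α, fun i => hgood i (mem_univ i), Set.injOn_univ.1 (by simpa using hinj)⟩
  intro s
  induction s using Finset.induction_on with
  | empty => exact ⟨fun _ => 0, by simp, by simp⟩
  | insert a s ha ih =>
    obtain ⟨α, hgood, hinj⟩ := ih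
    have : Finite (K a) := Module.finite_of_finite κ
    have : Fintype (K a) := Fintype.ofFinite _
    obtain ⟨β, hβ, hβS, hβg⟩ := exists_adjoin_simple_eq_top_minpoly_notMem_not_dvd
      (s.image fun i => minpoly κ (α i)) hg <| (hcard a).trans_le' <| by
        gcongr
        exact card_image_le.trans (card_le_univ s)
    have hupd : ∀ i ∈ s, Function.update α a β i = α i := fun i hi =>
      Function.update_of_ne (ne_of_mem_of_not_mem hi ha) _ _
    refine ⟨Function.update α a β, fun i hi => ?_, ?_⟩
    · rcases mem_insert.1 hi with rfl | hi
      · rw [Function.update_self]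
        exact ⟨hβ, hβg⟩
      · rw [hupd i hi]
        exact hgood i hi
    · rw [coe_insert, Set.injOn_insert (mod_cast ha)]
      refine ⟨hinj.congr fun i hi => by simp [hupd i hi], ?_⟩
      rintro ⟨i, hi, hia⟩
      simp only [Function.update_self, hupd i hi] at hia
      exact hβS (mem_image.2 ⟨i, hi, hia⟩)

theorem exists_surjective_pi_ker_sup_span_eq_top (hg : g ≠ 0)
    (hcard : ∀ i, finrank κ (K i) * (Fintype.card κ ^ (finrank κ (K i) / 2) + Fintype.card ι)
      + g.natDegree < Fintype.card κ ^ finrank κ (K i)) :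
    ∃ φ : κ[X] →ₐ[κ] ∀ i, K i,
      Function.Surjective φ ∧ RingHom.ker φ ⊔ Ideal.span {g} = ⊤ := by
  obtain ⟨α, hα, hinj⟩ := exists_generators_minpoly_injective hg hcard
  exact ⟨_, surjective_piAlgHom_aeval (fun i => (hα i).1) hinj,
    ker_piAlgHom_aeval_sup_span_eq_top fun i => (hα i).2⟩

end Generators

theorem Algebra.FormallyEtale.of_isReduced_of_perfectField (κ B : Type*) [Field κ]
    [PerfectField κ] [CommRing B] [Algebra κ B] [Module.Finite κ B] [IsReduced B] :
    Algebra.FormallyEtale κ B := by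
  have : IsArtinianRing B := IsArtinianRing.of_finite κ B
  let _ (m : MaximalSpectrum B) : Field (B ⧸ m.asIdeal) := Ideal.Quotient.field _
  have (m : MaximalSpectrum B) : Algebra.FormallyEtale κ (B ⧸ m.asIdeal) := .of_isSeparable κ _
  exact .of_equiv ((IsArtinianRing.equivPi B).restrictScalars κ).symm

theorem card_maximalSpectrum_mul_le_finrank {κ A : Type*} [Field κ] [CommRing A] [Algebra κ A]
    [Module.Finite κ A] {q : ℕ} (hq : ∀ m : MaximalSpectrum A, q ≤ finrank κ (A ⧸ m.asIdeal)) :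
    Nat.card (MaximalSpectrum A) * q ≤ finrank κ A := by
  have : IsArtinianRing A := IsArtinianRing.of_finite κ A
  have : Fintype (MaximalSpectrum A) := Fintype.ofFinite _
  have hsurj := RingHom.pi_surjective_of_pairwise_isCoprime
    (fun m : MaximalSpectrum A => Ideal.Quotient.mk m.asIdeal)
    (fun m => Ideal.Quotient.mk_surjective) fun m m' hne => by
      simpa only [Ideal.mk_ker] using m.isCoprime_of_ne hne
  calc Nat.card (MaximalSpectrum A) * q
        ≤ ∑ m : MaximalSpectrum A, finrank κ (A ⧸ m.asIdeal) := by
        rw [Nat.card_eq_fintype_card, ← card_univ, ← smul_eq_mul]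
        exact card_nsmul_le_sum univ _ q fun m _ => hq m
    _ = finrank κ (∀ m : MaximalSpectrum A, A ⧸ m.asIdeal) := (finrank_pi_fintype κ).symm
    _ ≤ finrank κ A := LinearMap.finrank_le_finrank_of_surjective
        (f := (AlgHom.pi fun m : MaximalSpectrum A =>
          Ideal.Quotient.mkₐ κ m.asIdeal).toLinearMap) fun y => hsurj y

section TensorProduct

variable {k κ B L : Type*} [Field k] [Field κ] [CommRing B] [Field L] [Algebra k κ] [Algebra κ B]
  [Algebra k B] [IsScalarTower k κ B] [Algebra k L]

theorem isReduced_tensorProduct_of_isSeparable [PerfectField κ] [Module.Finite κ B]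
    [IsReduced B] [Module.Finite k L] [Algebra.IsSeparable k L] : IsReduced (B ⊗[k] L) := by
  have := Algebra.FormallyEtale.of_isReduced_of_perfectField κ B
  have := Algebra.FormallyEtale.of_isSeparable k L
  have : Algebra.FormallyUnramified κ (B ⊗[k] L) := .comp κ B _
  have : Module.Finite κ (B ⊗[k] L) := .trans B _
  exact Algebra.FormallyUnramified.isReduced_of_field κ _

theorem prime_dvd_finrank_of_algHom {K : Type*} [Field K] [Algebra k K] [Algebra κ K]
    [IsScalarTower k κ K] (f : L →ₐ[k] K) {q : ℕ} (hq : q.Prime) (hL : finrank k L = q)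
    (hqκ : ¬ q ∣ finrank k κ) : q ∣ finrank κ K := by
  let _ := f.toAlgebra
  have : IsScalarTower k L K := .of_algebraMap_eq' f.comp_algebraMap.symm
  have hdvd : q ∣ finrank k κ * finrank κ K := by
    rw [finrank_mul_finrank k κ K, ← finrank_mul_finrank k L K, hL]
    exact dvd_mul_right q _
  exact (hq.dvd_mul.1 hdvd).resolve_left hqκ

theorem finrank_tensorProduct_eq [FiniteDimensional k κ] :
    finrank κ (B ⊗[k] L) = finrank κ B * finrank k L := by
  apply Nat.eq_of_mul_eq_mul_left (finrank_pos : 0 < finrank k κ)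
  rw [finrank_mul_finrank k κ (B ⊗[k] L), finrank_tensorProduct, ← finrank_mul_finrank k κ B,
    mul_assoc]

theorem prime_dvd_finrank_residueField_tensorProduct {q : ℕ} (hq : q.Prime)
    (hL : finrank k L = q) (hqκ : ¬ q ∣ finrank k κ) (m : MaximalSpectrum (B ⊗[k] L)) :
    q ∣ finrank κ (B ⊗[k] L ⧸ m.asIdeal) := by
  have := m.isMaximal
  let _ := Ideal.Quotient.field m.asIdeal
  exact prime_dvd_finrank_of_algHom
    ((Ideal.Quotient.mkₐ k m.asIdeal).comp Algebra.TensorProduct.includeRight) hq hL hqκ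

theorem le_finrank_residueField_tensorProduct [Module.Finite κ B] {q : ℕ} (hq : q.Prime)
    (hL : finrank k L = q) (hqκ : ¬ q ∣ finrank k κ) (m : MaximalSpectrum (B ⊗[k] L)) :
    q ≤ finrank κ (B ⊗[k] L ⧸ m.asIdeal) := by
  have := m.isMaximal
  have : Module.Finite k L := Module.finite_of_finrank_pos (hL ▸ hq.pos)
  have : Module.Finite κ (B ⊗[k] L) := .trans B _
  exact Nat.le_of_dvd finrank_pos (prime_dvd_finrank_residueField_tensorProduct hq hL hqκ m)

theorem card_maximalSpectrum_tensorProduct_le [Module.Finite κ B] [FiniteDimensional k κ]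
    {q : ℕ} (hq : q.Prime) (hL : finrank k L = q) (hqκ : ¬ q ∣ finrank k κ) :
    Nat.card (MaximalSpectrum (B ⊗[k] L)) ≤ finrank κ B := by
  have : Module.Finite k L := Module.finite_of_finrank_pos (hL ▸ hq.pos)
  have : Module.Finite κ (B ⊗[k] L) := .trans B _
  refine Nat.le_of_mul_le_mul_right ?_ hq.pos
  rw [← hL, ← finrank_tensorProduct_eq]
  exact card_maximalSpectrum_mul_le_finrank
    (hL ▸ le_finrank_residueField_tensorProduct hq hL hqκ)

end TensorProduct

def AlgEquiv.sumPiEquivProdPi (R : Type*) [CommSemiring R] {ι ι' : Type*}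
    (A : ι ⊕ ι' → Type*) [∀ i, Semiring (A i)] [∀ i, Algebra R (A i)] :
    (∀ i, A i) ≃ₐ[R] (∀ a, A (.inl a)) × ∀ b, A (.inr b) where
  __ := Equiv.sumPiEquivProdPi A
  map_mul' _ _ := rfl
  map_add' _ _ := rfl
  commutes' _ := rfl

theorem exists_surjective_prod_pi_ker_sup_span_eq_top {κ ι₁ ι₂ : Type*} [Field κ] [Fintype κ]
    [Fintype ι₁] [Fintype ι₂] (K₁ : ι₁ → Type u) (K₂ : ι₂ → Type u)
    [F₁ : ∀ i, Field (K₁ i)] [F₂ : ∀ i, Field (K₂ i)]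
    [A₁ : ∀ i, Algebra κ (K₁ i)] [A₂ : ∀ i, Algebra κ (K₂ i)]
    [D₁ : ∀ i, FiniteDimensional κ (K₁ i)] [D₂ : ∀ i, FiniteDimensional κ (K₂ i)]
    {g : κ[X]} (hg : g ≠ 0) {N : ℕ}
    (hN : ∀ e, N ≤ e → e * (Fintype.card κ ^ (e / 2) + (Fintype.card ι₁ + Fintype.card ι₂))
      + g.natDegree < Fintype.card κ ^ e)
    (h₁ : ∀ i, N ≤ finrank κ (K₁ i)) (h₂ : ∀ i, N ≤ finrank κ (K₂ i)) :
    ∃ φ : κ[X] →ₐ[κ] (∀ i, K₁ i) × ∀ i, K₂ i,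
      Function.Surjective φ ∧ RingHom.ker φ ⊔ Ideal.span {g} = ⊤ := by
  let _ : ∀ i, Field (Sum.elim K₁ K₂ i) := fun i => Sum.rec F₁ F₂ i
  let _ : ∀ i, Algebra κ (Sum.elim K₁ K₂ i) := fun i => Sum.rec A₁ A₂ i
  have : ∀ i, FiniteDimensional κ (Sum.elim K₁ K₂ i) := fun i => Sum.rec D₁ D₂ i
  rw [← Fintype.card_sum] at hN
  obtain ⟨φ, hφ, hker⟩ := exists_surjective_pi_ker_sup_span_eq_top (K := Sum.elim K₁ K₂) hg
    (Sum.forall.2 ⟨fun i => hN _ (h₁ i), fun i => hN _ (h₂ i)⟩)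
  let e := AlgEquiv.sumPiEquivProdPi κ (Sum.elim K₁ K₂)
  refine ⟨e.toAlgHom.comp φ, e.surjective.comp hφ, ?_⟩
  have := RingHom.ker_comp_of_injective (φ : κ[X] →+* ∀ i, Sum.elim K₁ K₂ i)
    (f := e.toRingEquiv.toRingHom) e.toRingEquiv.injective
  exact this ▸ hker

theorem exists_surjective_prod_ker_sup_span_eq_top {κ : Type*} {A₁ A₂ : Type u} [Field κ]
    [Fintype κ] [CommRing A₁] [CommRing A₂] [Algebra κ A₁] [Algebra κ A₂] [Module.Finite κ A₁]
    [Module.Finite κ A₂] [IsReduced A₁] [IsReduced A₂] {g : κ[X]} (hg : g ≠ 0) {N c : ℕ}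
    (hN : ∀ e, N ≤ e → e * (Fintype.card κ ^ (e / 2) + c) + c < Fintype.card κ ^ e)
    (hc : Nat.card (MaximalSpectrum A₁) + Nat.card (MaximalSpectrum A₂) + g.natDegree ≤ c)
    (h₁ : ∀ m : MaximalSpectrum A₁, N ≤ finrank κ (A₁ ⧸ m.asIdeal))
    (h₂ : ∀ m : MaximalSpectrum A₂, N ≤ finrank κ (A₂ ⧸ m.asIdeal)) :
    ∃ φ : κ[X] →ₐ[κ] A₁ × A₂, Function.Surjective φ ∧ RingHom.ker φ ⊔ Ideal.span {g} = ⊤ := by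
  have : IsArtinianRing A₁ := .of_finite κ A₁
  have : IsArtinianRing A₂ := .of_finite κ A₂
  have : Fintype (MaximalSpectrum A₁) := .ofFinite _
  have : Fintype (MaximalSpectrum A₂) := .ofFinite _
  let _ (m : MaximalSpectrum A₁) : Field (A₁ ⧸ m.asIdeal) := Ideal.Quotient.field _
  let _ (m : MaximalSpectrum A₂) : Field (A₂ ⧸ m.asIdeal) := Ideal.Quotient.field _
  rw [Nat.card_eq_fintype_card, Nat.card_eq_fintype_card] at hc
  obtain ⟨φ, hφ, hker⟩ := exists_surjective_prod_pi_ker_sup_span_eq_top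
    (fun m : MaximalSpectrum A₁ => A₁ ⧸ m.asIdeal)
    (fun m : MaximalSpectrum A₂ => A₂ ⧸ m.asIdeal) hg
    (fun e he => (hN e he).trans_le' (by gcongr <;> omega)) h₁ h₂
  let e := ((IsArtinianRing.equivPi A₁).restrictScalars κ).prodCongr
    ((IsArtinianRing.equivPi A₂).restrictScalars κ)
  refine ⟨e.symm.toAlgHom.comp φ, e.symm.surjective.comp hφ, ?_⟩
  have := RingHom.ker_comp_of_injective (φ : κ[X] →+* _)
    (f := e.symm.toRingEquiv.toRingHom) e.symm.toRingEquiv.injective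
  exact this ▸ hker

theorem stmt_8_general (k κ : Type) [Field k] [Field κ] [Fintype k] [Fintype κ]
    [Algebra k κ] (B : Type) [CommRing B] [Algebra κ B] [Algebra k B]
    [IsScalarTower k κ B] [FiniteDimensional κ B] [IsReduced B]
    (I : Ideal (Polynomial κ)) (hI : I ≠ ⊥) :
    ∃ N : ℕ, ∀ q₁ q₂ : ℕ, q₁.Prime → q₂.Prime → q₁ ≠ q₂ → N ≤ q₁ → N ≤ q₂ →
      ∀ (k₁ k₂ : Type) [Field k₁] [Field k₂] [Algebra k k₁] [Algebra k k₂],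
        Module.finrank k k₁ = q₁ → Module.finrank k k₂ = q₂ →
          ∃ φ : Polynomial κ →ₐ[κ] (TensorProduct k B k₁ × TensorProduct k B k₂),
            Function.Surjective φ ∧ RingHom.ker φ.toRingHom ⊔ I = ⊤ := by
  obtain ⟨g, rfl⟩ : ∃ g, I = Ideal.span {g} := ⟨_, (Ideal.span_singleton_generator I).symm⟩
  have hg : g ≠ 0 := by rintro rfl; exact hI (Ideal.span_singleton_eq_bot.2 rfl)
  obtain ⟨N, hN⟩ := exists_forall_le_mul_pow_half_add_lt_pow (Fintype.card κ)
    (2 * finrank κ B + g.natDegree) Fintype.one_lt_card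
  refine ⟨max (finrank k κ + 1) N, fun q₁ q₂ hq₁ hq₂ _ hq₁N hq₂N k₁ k₂ _ _ _ _ h₁ h₂ => ?_⟩
  have hndvd (q : ℕ) (hq : finrank k κ < q) : ¬ q ∣ finrank k κ := fun h =>
    (Nat.le_of_dvd finrank_pos h).not_gt hq
  have : Module.Finite k k₁ := Module.finite_of_finrank_pos (h₁ ▸ hq₁.pos)
  have : Module.Finite k k₂ := Module.finite_of_finrank_pos (h₂ ▸ hq₂.pos)
  have : Module.Finite κ (B ⊗[k] k₁) := .trans B _
  have : Module.Finite κ (B ⊗[k] k₂) := .trans B _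
  have := isReduced_tensorProduct_of_isSeparable (k := k) (κ := κ) (B := B) (L := k₁)
  have := isReduced_tensorProduct_of_isSeparable (k := k) (κ := κ) (B := B) (L := k₂)
  have hq₁κ := hndvd q₁ (by omega)
  have hq₂κ := hndvd q₂ (by omega)
  have hc₁ := card_maximalSpectrum_tensorProduct_le (B := B) hq₁ h₁ hq₁κ
  have hc₂ := card_maximalSpectrum_tensorProduct_le (B := B) hq₂ h₂ hq₂κ
  exact exists_surjective_prod_ker_sup_span_eq_top hg hN (by omega)
    (fun m => (le_finrank_residueField_tensorProduct hq₁ h₁ hq₁κ m).trans' (by omega))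
    (fun m => (le_finrank_residueField_tensorProduct hq₂ h₂ hq₂κ m).trans' (by omega))

/-- Affine form of Lemma 3.6 (assertions (iv) and (v)): let `k ⊆ κ` be finite fields,
`B` a finite étale `κ`-algebra (equivalently, a nonzero finite-dimensional reduced
commutative `κ`-algebra) with a `κ`-algebra homomorphism `B → κ`, and `I` a nonzero
ideal of `κ[t]`. Then for all sufficiently large distinct primes `q₁ ≠ q₂` and field
extensions `kⱼ/k` of degree `qⱼ`, there is a surjective `κ`-algebra homomorphism
`κ[t] → (B ⊗[k] k₁) × (B ⊗[k] k₂)` whose kernel is comaximal with `I`. -/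
theorem stmt_8 (k κ : Type) [Field k] [Field κ] [Fintype k] [Fintype κ]
    [Algebra k κ] (B : Type) [CommRing B] [Algebra κ B] [Algebra k B]
    [IsScalarTower k κ B] [Nontrivial B] [FiniteDimensional κ B] [IsReduced B]
    (ψ : B →ₐ[κ] κ) (I : Ideal (Polynomial κ)) (hI : I ≠ ⊥) :
    ∃ N : ℕ, ∀ q₁ q₂ : ℕ, q₁.Prime → q₂.Prime → q₁ ≠ q₂ → N ≤ q₁ → N ≤ q₂ →
      ∀ (k₁ k₂ : Type) [Field k₁] [Field k₂] [Algebra k k₁] [Algebra k k₂],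
        Module.finrank k k₁ = q₁ → Module.finrank k k₂ = q₂ →
          ∃ φ : Polynomial κ →ₐ[κ] (TensorProduct k B k₁ × TensorProduct k B k₂),
            Function.Surjective φ ∧ RingHom.ker φ.toRingHom ⊔ I = ⊤ :=
  stmt_8_general k κ B I hI
end
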